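/- Let T > 0 and N > 0. Then there exists u₀ ∈ L²(ℝ) such that the one-dimensional heat solution u(t,x) = (4πt)^{−1/2} ∫_ℝ e^{−(x−y)²/(4t)} u₀(y) dy satisfies u(T,x) = sin(Nπx) · (4π(T+1))^{−1/2} e^{−x²/(4(T+1))} for all x ∈ ℝ. In particular the function x ↦ sin(Nπx) e^{−x²/(4(T+1))} lies (up to the stated constant) in the range of the heat semigroup at time T acting on L²(ℝ), and it vanishes at every point of the lattice ℤ/N = {n/N : n ∈ ℤ} while having positive L² norm. -/

import Mathlib

open Real MeasureTheory

/-- The solution of the one-dimensional heat equation with initial datum `u₀`, given by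
convolution with the Gaussian heat kernel. -/
noncomputable def heatSolution1d (u₀ : ℝ → ℝ) (t x : ℝ) : ℝ :=
  (4 * Real.pi * t) ^ (-(1 : ℝ) / 2) * ∫ y, Real.exp (-(x - y) ^ 2 / (4 * t)) * u₀ y

/-!
The Gaussian-modulated sines `sin (a x) * c * exp (-x² / (4 s))` form a family preserved by the
heat flow: completing the square in the complex Gaussian integral of `exp (i a y - y² / (4 s))`
shows that after time `t` the width parameter `s` becomes `s + t`, the frequency shrinks to
`a s / (s + t)` and the amplitude is damped by `√(s / (s + t)) * exp (-a² s t / (s + t))`.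
Running this backwards from `s = T + 1` to `s = 1`, with frequency `N π (T + 1)` at time `0`,
gives an `L²` initial datum whose solution at time `T` is the prescribed function.
-/

theorem integral_exp_quadratic_mul_sin {b : ℝ} (hb : b < 0) (p q d : ℝ) :
    ∫ y : ℝ, exp (b * y ^ 2 + p * y + d) * sin (q * y) =
      √(π / -b) * (exp (d - (p ^ 2 - q ^ 2) / (4 * b)) * sin (-(p * q) / (2 * b))) := by
  have hbc : (b : ℂ).re < 0 := by simpa using hb
  have h_im (y : ℝ) : exp (b * y ^ 2 + p * y + d) * sin (q * y) =
      (Complex.exp (b * (y : ℂ) ^ 2 + (p + q * Complex.I) * y + d)).im := by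
    have : (b : ℂ) * y ^ 2 + (p + q * Complex.I) * y + d =
        ((b * y ^ 2 + p * y + d : ℝ) : ℂ) + ((q * y : ℝ) : ℂ) * Complex.I := by
      push_cast; ring
    rw [this, Complex.exp_im, Complex.add_re, Complex.add_im, Complex.ofReal_re,
      Complex.ofReal_im, Complex.re_ofReal_mul, Complex.im_ofReal_mul]
    simp
  have h_sqrt : ((π : ℂ) / -(b : ℂ)) ^ (1 / 2 : ℂ) = (√(π / -b) : ℂ) := by
    rw [sqrt_eq_rpow, Complex.ofReal_cpow (div_nonneg pi_pos.le (neg_nonneg.2 hb.le))]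
    norm_num
  have h_exponent : (d : ℂ) - (p + q * Complex.I) ^ 2 / (4 * b) =
      ((d - (p ^ 2 - q ^ 2) / (4 * b) : ℝ) : ℂ) +
        ((-(p * q) / (2 * b) : ℝ) : ℂ) * Complex.I := by
    have : (b : ℂ) ≠ 0 := by exact_mod_cast hb.ne
    push_cast
    field_simp
    linear_combination (-2 * q ^ 2 : ℂ) * Complex.I_sq
  simp_rw [h_im]
  refine (integral_im (integrable_cexp_quadratic' hbc _ _)).trans ?_
  change Complex.im _ = _
  rw [integral_cexp_quadratic hbc, h_sqrt, h_exponent, Complex.im_ofReal_mul, Complex.exp_im,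
    Complex.add_re, Complex.add_im, Complex.ofReal_re, Complex.ofReal_im, Complex.re_ofReal_mul,
    Complex.im_ofReal_mul]
  simp

noncomputable def sinGaussian (c a s x : ℝ) : ℝ :=
  sin (a * x) * (c * exp (-x ^ 2 / (4 * s)))

theorem heatSolution1d_sinGaussian (c a : ℝ) {s t : ℝ} (hs : 0 < s) (ht : 0 < t) :
    heatSolution1d (sinGaussian c a s) t =
      sinGaussian (c * √(s / (s + t)) * exp (-(a ^ 2 * s * t / (s + t)))) (a * s / (s + t))
        (s + t) := by
  funext x
  set b := -(s + t) / (4 * s * t)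
  have hb : b < 0 := div_neg_of_neg_of_pos (by linarith) (by positivity)
  have h_integrand (y : ℝ) : exp (-(x - y) ^ 2 / (4 * t)) * sinGaussian c a s y =
      c * (exp (b * y ^ 2 + x / (2 * t) * y + -x ^ 2 / (4 * t)) * sin (a * y)) := by
    have h_exp : exp (b * y ^ 2 + x / (2 * t) * y + -x ^ 2 / (4 * t)) =
        exp (-(x - y) ^ 2 / (4 * t)) * exp (-y ^ 2 / (4 * s)) := by
      rw [← exp_add]
      congr 1
      simp only [b]
      field_simp
      ring
    rw [sinGaussian, h_exp]
    ring
  have h_sqrt : (4 * π * t) ^ (-(1 : ℝ) / 2) * √(π / -b) = √(s / (s + t)) := by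
    rw [neg_div, rpow_neg (by positivity), ← sqrt_eq_rpow, ← sqrt_inv,
      ← sqrt_mul (by positivity)]
    congr 1
    simp only [b]
    field_simp
  have h_exponent : -x ^ 2 / (4 * t) - ((x / (2 * t)) ^ 2 - a ^ 2) / (4 * b) =
      -(a ^ 2 * s * t / (s + t)) + -x ^ 2 / (4 * (s + t)) := by
    simp only [b]
    field_simp
    ring
  have h_frequency : -(x / (2 * t) * a) / (2 * b) = a * s / (s + t) * x := by
    simp only [b]
    field_simp
    ring
  simp_rw [heatSolution1d, h_integrand, integral_const_mul, integral_exp_quadratic_mul_sin hb,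
    h_exponent, h_frequency, sinGaussian, exp_add]
  rw [← h_sqrt]
  ring

theorem continuous_sinGaussian (c a s : ℝ) : Continuous (sinGaussian c a s) := by
  unfold sinGaussian
  fun_prop

theorem integrable_sinGaussian_sq (c a : ℝ) {s : ℝ} (hs : 0 < s) :
    Integrable fun x ↦ sinGaussian c a s x ^ 2 := by
  refine ((integrable_exp_neg_mul_sq (inv_pos.2 (mul_pos two_pos hs))).const_mul (c ^ 2)).mono'
    ((continuous_sinGaussian c a s).pow 2).aestronglyMeasurable (.of_forall fun x ↦ ?_)
  have h_exp_sq : exp (-x ^ 2 / (4 * s)) ^ 2 = exp (-(2 * s)⁻¹ * x ^ 2) := by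
    rw [← exp_nat_mul]
    congr 1
    field_simp
    ring
  calc ‖sinGaussian c a s x ^ 2‖ = sin (a * x) ^ 2 * (c ^ 2 * exp (-x ^ 2 / (4 * s)) ^ 2) := by
        rw [norm_of_nonneg (sq_nonneg _), sinGaussian]
        ring
    _ ≤ 1 * (c ^ 2 * exp (-x ^ 2 / (4 * s)) ^ 2) := by
        gcongr
        exact sin_sq_le_one _
    _ = c ^ 2 * exp (-(2 * s)⁻¹ * x ^ 2) := by rw [one_mul, h_exp_sq]

theorem memLp_sinGaussian (c a : ℝ) {s : ℝ} (hs : 0 < s) : MemLp (sinGaussian c a s) 2 :=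
  (memLp_two_iff_integrable_sq (continuous_sinGaussian c a s).aestronglyMeasurable).2
    (integrable_sinGaussian_sq c a hs)

theorem integral_sinGaussian_sq_pos {c a s : ℝ} (hc : c ≠ 0) (ha : a ≠ 0) (hs : 0 < s) :
    0 < ∫ x, sinGaussian c a s x ^ 2 := by
  rw [integral_pos_iff_support_of_nonneg (fun x ↦ sq_nonneg _) (integrable_sinGaussian_sq c a hs)]
  refine ((continuous_sinGaussian c a s).pow 2).isOpen_support.measure_pos _
    ⟨π / 2 / a, pow_ne_zero 2 ?_⟩
  rw [sinGaussian, mul_div_cancel₀ _ ha, sin_pi_div_two, one_mul]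
  exact mul_ne_zero hc (exp_pos _).ne'

/-- For every `T > 0` and `N > 0` there exists `u₀ ∈ L²(ℝ)` whose heat solution
at time `T` equals `sin (Nπx) * (4π(T+1))^{-1/2} * exp (-x²/(4(T+1)))`; in particular this
solution vanishes at every point of the lattice `ℤ/N` while having positive `L²` norm. -/
theorem heat_solution_sine_gaussian
    (T N : ℝ) (hT : 0 < T) (hN : 0 < N) :
    ∃ u₀ : ℝ → ℝ,
      MemLp u₀ 2 (volume : Measure ℝ) ∧
      (∀ x : ℝ,
        heatSolution1d u₀ T x =
          Real.sin (N * Real.pi * x) *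
            ((4 * Real.pi * (T + 1)) ^ (-(1 : ℝ) / 2) * Real.exp (-x ^ 2 / (4 * (T + 1))))) ∧
      (∀ n : ℤ, heatSolution1d u₀ T ((n : ℝ) / N) = 0) ∧
      0 < ∫ x, (heatSolution1d u₀ T x) ^ 2 := by
  set a := N * π * (T + 1)
  set K := (4 * π * (T + 1)) ^ (-(1 : ℝ) / 2)
  set damping := √(1 / (1 + T)) * exp (-(a ^ 2 * 1 * T / (1 + T)))
  have h_flow :
      heatSolution1d (sinGaussian (K / damping) a 1) T = sinGaussian K (N * π) (T + 1) := by
    rw [heatSolution1d_sinGaussian _ _ one_pos hT, mul_assoc, div_mul_cancel₀ _ (by positivity),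
      add_comm 1 T, mul_one, mul_div_cancel_right₀ _ (by positivity)]
  refine ⟨_, memLp_sinGaussian _ _ one_pos, fun x ↦ by rw [h_flow]; rfl, fun n ↦ ?_, ?_⟩
  · rw [h_flow, sinGaussian, show N * π * (n / N) = n * π by field_simp, sin_int_mul_pi,
      zero_mul]
  · rw [h_flow]
    exact integral_sinGaussian_sq_pos (by positivity) (by positivity) (by positivity)
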